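/- (Discrete Dirichlet problem.) Let h>0, 0<s<1/2, let B^h = {j∈ℤ : a ≤ j ≤ b} be a nonempty finite discrete interval, and let f:B^h→ℝ. Then there exists a unique u:ℤ→ℝ such that u_j = 0 for all j∉B^h and (-Δ_h)^s u_j = f_j for all j∈B^h. -/

import Mathlib

/-!
On functions vanishing off a finite set `B`, an operator `Σ' m, (u j - u m) K(j - m)` with
a nonnegative summable kernel acts as the matrix `(Σ K) • 1 - (K (j - m))_{j,m ∈ B}`. The row
sums of the off-diagonal part miss the mass `K (j - m)` of some `m ∉ B`, which is positive, so
the matrix is strictly diagonally dominant and hence invertible (Gershgorin).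

For `K = Ksh h s` with `0 < s < 1`, summability comes from telescoping:
`Γ(x - s) / Γ(x + 1 + s) = (b x - b (x + 1)) / (2 s)` with `b x = Γ(x - s) / Γ(x + s)`.
-/

/-- The kernel of the fractional discrete Laplacian on the mesh of size `h`. -/
noncomputable def Ksh (h s : ℝ) (m : ℤ) : ℝ :=
  if m = 0 then 0 else
    ((4 : ℝ) ^ s * Real.Gamma (1/2 + s) / (Real.sqrt Real.pi * (Real.Gamma (1 - s) / s))) *
      (Real.Gamma (|(m : ℝ)| - s) / (h ^ (2 * s) * Real.Gamma (|(m : ℝ)| + 1 + s)))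

/-- The fractional discrete Laplacian `(-Δ_h)^s u_j = Σ_{m ≠ j} (u j - u m) K_s^h(j-m)`. -/
noncomputable def fracLap (h s : ℝ) (u : ℤ → ℝ) (j : ℤ) : ℝ :=
  ∑' m : ℤ, (u j - u m) * Ksh h s (j - m)

open Matrix

section KernelLaplacian

variable {G : Type*} [AddGroup G] {K : G → ℝ}

noncomputable def kernelLap (K : G → ℝ) (u : G → ℝ) (j : G) : ℝ :=
  ∑' m, (u j - u m) * K (j - m)

noncomputable def dirichletMatrix [DecidableEq G] (K : G → ℝ) (B : Finset G) : Matrix B B ℝ :=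
  (∑' g, K g) • 1 - Matrix.of fun j m : B => K (j - m)

theorem Summable.comp_sub_left (hK : Summable K) (j : G) : Summable fun m => K (j - m) :=
  hK.comp_injective sub_right_injective

theorem tsum_comp_sub_left (K : G → ℝ) (j : G) : ∑' m, K (j - m) = ∑' g, K g :=
  (Equiv.subLeft j).tsum_eq K

theorem kernelLap_eq_mulVec [DecidableEq G] (hK : Summable K) {B : Finset G} {u : G → ℝ}
    (hu : ∀ j ∉ B, u j = 0) (j : B) :
    kernelLap K u j = (dirichletMatrix K B *ᵥ fun m : B => u m) j := by
  have hfin : ∑' m, u m * K (j - m) = ∑ m : B, K (j - m) * u m := by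
    rw [tsum_eq_sum (s := B) fun m hm => by rw [hu m hm, zero_mul],
      ← Finset.sum_coe_sort B]
    exact Finset.sum_congr rfl fun m _ => mul_comm _ _
  have hsummable : Summable fun m => u m * K (j - m) :=
    summable_of_hasFiniteSupport <| B.finite_toSet.subset fun m hm => by
      by_contra hmB
      exact hm (by simp only [hu m hmB, zero_mul])
  calc kernelLap K u j
      = ∑' m, (u j * K (j - m) - u m * K (j - m)) := by simp only [kernelLap, sub_mul]
    _ = (∑' g, K g) * u j - ∑ m : B, K (j - m) * u m := by
      rw [(hK.comp_sub_left _).mul_left (u j) |>.tsum_sub hsummable, tsum_mul_left,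
        tsum_comp_sub_left, hfin, mul_comm]
    _ = _ := by
      rw [dirichletMatrix, sub_mulVec, smul_mulVec, one_mulVec]
      rfl

theorem sum_lt_tsum_of_pos (hK : Summable K) (hK0 : 0 ≤ K) {B : Finset G} {j m₀ : G}
    (hm₀ : m₀ ∉ B) (hpos : 0 < K (j - m₀)) : ∑ m ∈ B, K (j - m) < ∑' g, K g :=
  calc ∑ m ∈ B, K (j - m)
      < ∑ m ∈ B.cons m₀ hm₀, K (j - m) := by
        rw [Finset.sum_cons]
        exact lt_add_of_pos_left _ hpos
    _ ≤ ∑' m, K (j - m) := (hK.comp_sub_left j).sum_le_tsum _ fun m _ => hK0 _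
    _ = ∑' g, K g := tsum_comp_sub_left K j

theorem dirichletMatrix_apply_self [DecidableEq G] (K : G → ℝ) (B : Finset G) (j : B) :
    dirichletMatrix K B j j = ∑' g, K g - K 0 := by
  simp [dirichletMatrix]

theorem dirichletMatrix_apply_of_ne [DecidableEq G] (K : G → ℝ) {B : Finset G} {j m : B}
    (hjm : j ≠ m) : dirichletMatrix K B j m = -K (j - m) := by
  simp [dirichletMatrix, one_apply_ne hjm]

theorem det_dirichletMatrix_ne_zero [DecidableEq G] (hK : Summable K) (hK0 : 0 ≤ K)
    {B : Finset G} (hB : ∀ j ∈ B, ∃ m ∉ B, 0 < K (j - m)) :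
    (dirichletMatrix K B).det ≠ 0 := by
  refine det_ne_zero_of_sum_row_lt_diag fun k => ?_
  obtain ⟨m₀, hm₀, hpos⟩ := hB k k.2
  have hoff : ∑ m ∈ Finset.univ.erase k, ‖dirichletMatrix K B k m‖
      = ∑ m ∈ B, K (k - m) - K 0 := by
    rw [eq_sub_iff_add_eq, ← Finset.sum_coe_sort B,
      ← Finset.sum_erase_add _ _ (Finset.mem_univ k), sub_self]
    refine congrArg (· + K 0) (Finset.sum_congr rfl fun m hm => ?_)
    rw [dirichletMatrix_apply_of_ne K (Finset.ne_of_mem_erase hm).symm, norm_neg,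
      Real.norm_of_nonneg (hK0 _)]
  rw [hoff, dirichletMatrix_apply_self, Real.norm_eq_abs]
  exact (sub_lt_sub_right (sum_lt_tsum_of_pos hK hK0 hm₀ hpos) _).trans_le (le_abs_self _)

theorem existsUnique_kernelLap_eq (hK : Summable K) (hK0 : 0 ≤ K) {B : Finset G}
    (hB : ∀ j ∈ B, ∃ m ∉ B, 0 < K (j - m)) (f : G → ℝ) :
    ∃! u : G → ℝ, (∀ j ∉ B, u j = 0) ∧ ∀ j ∈ B, kernelLap K u j = f j := by
  classical
  have hM : IsUnit (dirichletMatrix K B) :=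
    (isUnit_iff_isUnit_det _).mpr (det_dirichletMatrix_ne_zero hK hK0 hB).isUnit
  obtain ⟨v, hv⟩ := mulVec_surjective_iff_isUnit.mpr hM fun j : B => f j
  set u : G → ℝ := Function.extend Subtype.val v 0
  have hu : ∀ j ∉ B, u j = 0 := fun j hj =>
    Function.extend_apply' _ _ _ fun ⟨m, hm⟩ => hj (hm ▸ m.2)
  have hrestr : (fun m : B => u m) = v := funext (Subtype.val_injective.extend_apply v 0)
  refine ⟨u, ⟨hu, fun j hj => ?_⟩, fun w ⟨hw, hwf⟩ => ?_⟩
  · rw [kernelLap_eq_mulVec hK hu ⟨j, hj⟩, hrestr, hv]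
  · have hwv : (fun m : B => w m) = v := mulVec_injective_iff_isUnit.mpr hM <| by
      rw [hv]
      funext j
      rw [← kernelLap_eq_mulVec hK hw j, hwf j j.2]
    funext j
    by_cases hj : j ∈ B
    · exact (congrFun hwv ⟨j, hj⟩).trans (congrFun hrestr ⟨j, hj⟩).symm
    · rw [hw j hj, hu j hj]

theorem existsUnique_kernelLap_eq_of_pos [Infinite G] (hK : Summable K) (hK0 : 0 ≤ K)
    (hpos : ∀ g ≠ 0, 0 < K g) (B : Finset G) (f : G → ℝ) :
    ∃! u : G → ℝ, (∀ j ∉ B, u j = 0) ∧ ∀ j ∈ B, kernelLap K u j = f j := by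
  refine existsUnique_kernelLap_eq hK hK0 (fun j hj => ?_) f
  obtain ⟨m, hm⟩ := Infinite.exists_notMem_finset B
  exact ⟨m, hm, hpos _ (sub_ne_zero.mpr fun hjm => hm (hjm ▸ hj))⟩

end KernelLaplacian

namespace Real

theorem Gamma_div_Gamma_sub_Gamma_div_Gamma_add_one {s x : ℝ} (hx : |s| < x) :
    Gamma (x - s) / Gamma (x + s) - Gamma (x + 1 - s) / Gamma (x + 1 + s)
      = 2 * s * (Gamma (x - s) / Gamma (x + 1 + s)) := by
  obtain ⟨hsx, hxs⟩ := abs_lt.mp hx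
  have hplus : 0 < x + s := by linarith
  have hminus : x - s ≠ 0 := by linarith
  have := (Gamma_pos_of_pos hplus).ne'
  rw [add_sub_right_comm, Gamma_add_one hminus, add_right_comm x 1 s, Gamma_add_one hplus.ne']
  field_simp
  ring

theorem summable_Gamma_sub_div_Gamma_add {s : ℝ} (hs0 : 0 < s) (hs1 : s < 1) :
    Summable fun n : ℕ => Gamma (n + 1 - s) / Gamma (n + 1 + 1 + s) := by
  have hratio (n : ℕ) {t : ℝ} (ht : 0 ≤ t) : 0 ≤ Gamma (n + 1 - s) / Gamma (n + 1 + t) := by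
    have : (0 : ℝ) ≤ n := n.cast_nonneg
    exact div_nonneg (Gamma_pos_of_pos (by linarith)).le (Gamma_pos_of_pos (by linarith)).le
  set b : ℕ → ℝ := fun n => Gamma (n + 1 - s) / Gamma (n + 1 + s)
  have hterm (n : ℕ) :
      Gamma (n + 1 - s) / Gamma (n + 1 + 1 + s) = (b n - b (n + 1)) / (2 * s) := by
    have hx : |s| < n + 1 := by rw [abs_of_pos hs0]; linarith [n.cast_nonneg (α := ℝ)]
    rw [eq_div_iff (by positivity), mul_comm]
    simp only [b, Nat.cast_succ]
    exact (Gamma_div_Gamma_sub_Gamma_div_Gamma_add_one hx).symm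
  refine summable_of_sum_range_le (c := b 0 / (2 * s)) (fun n => ?_) (fun n => ?_)
  · simpa only [add_assoc] using hratio n (by linarith : 0 ≤ 1 + s)
  · simp_rw [hterm, ← Finset.sum_div, Finset.sum_range_sub']
    gcongr
    exact sub_le_self _ (hratio n hs0.le)

end Real

section Ksh

variable {h s : ℝ}

theorem fracLap_eq_kernelLap : fracLap h s = kernelLap (Ksh h s) := rfl

theorem Ksh_neg (m : ℤ) : Ksh h s (-m) = Ksh h s m := by
  simp [Ksh]

theorem Ksh_pos (hh : 0 < h) (hs0 : 0 < s) (hs1 : s < 1) {m : ℤ} (hm : m ≠ 0) :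
    0 < Ksh h s m := by
  have hm1 : (1 : ℝ) ≤ |(m : ℝ)| := by
    rw [← Int.cast_abs]
    exact_mod_cast Int.one_le_abs hm
  have := Real.Gamma_pos_of_pos (sub_pos.mpr hs1)
  have := Real.Gamma_pos_of_pos (by linarith : 0 < |(m : ℝ)| - s)
  rw [Ksh, if_neg hm]
  positivity

theorem Ksh_nonneg (hh : 0 < h) (hs0 : 0 < s) (hs1 : s < 1) : 0 ≤ Ksh h s := fun m => by
  rcases eq_or_ne m 0 with rfl | hm
  · simp [Ksh]
  · exact (Ksh_pos hh hs0 hs1 hm).le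

theorem summable_Ksh (hs0 : 0 < s) (hs1 : s < 1) : Summable (Ksh h s) := by
  have hsucc : Summable fun n : ℕ => Ksh h s (n + 1) := by
    have habs (n : ℕ) : |((n + 1 : ℤ) : ℝ)| = n + 1 := by
      push_cast
      exact abs_of_nonneg (by positivity)
    simp only [Ksh, Nat.cast_add_one_ne_zero, if_false, habs]
    refine .mul_left _ ?_
    simpa only [div_mul_eq_div_div_swap] using
      (Real.summable_Gamma_sub_div_Gamma_add hs0 hs1).div_const _
  have hnat : Summable fun n : ℕ => Ksh h s n :=
    (summable_nat_add_iff 1).mp (by simpa only [Nat.cast_succ] using hsucc)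
  exact .of_nat_of_neg hnat (by simpa only [Ksh_neg] using hnat)

end Ksh

theorem discrete_Dirichlet_problem_general (h s : ℝ) (hh : 0 < h) (hs0 : 0 < s) (hs1 : s < 1/2)
    (a b : ℤ) (f : ℤ → ℝ) :
    ∃! u : ℤ → ℝ,
      (∀ j : ℤ, j ∉ Set.Icc a b → u j = 0) ∧
      (∀ j ∈ Set.Icc a b, fracLap h s u j = f j) := by
  have hs1' : s < 1 := by linarith
  simpa only [← Finset.coe_Icc, Finset.mem_coe, fracLap_eq_kernelLap] using
    existsUnique_kernelLap_eq_of_pos (summable_Ksh hs0 hs1') (Ksh_nonneg hh hs0 hs1')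
      (fun _ => Ksh_pos hh hs0 hs1') (Finset.Icc a b) f

/-- Existence and uniqueness for the nonlocal discrete Dirichlet problem on a finite
discrete interval `B^h = {j : a ≤ j ≤ b}`. -/
theorem discrete_Dirichlet_problem (h s : ℝ) (hh : 0 < h) (hs0 : 0 < s) (hs1 : s < 1/2)
    (a b : ℤ) (hab : a ≤ b) (f : ℤ → ℝ) :
    ∃! u : ℤ → ℝ,
      (∀ j : ℤ, j ∉ Set.Icc a b → u j = 0) ∧
      (∀ j ∈ Set.Icc a b, fracLap h s u j = f j) :=
  discrete_Dirichlet_problem_general h s hh hs0 hs1 a b f
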